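/- arXiv:0908.4491 — 2 statements merged into one kernel-verified Lean document; each statement's English description precedes it below -/
import Mathlib

section
/- Let T_A be a parameterized theory (a category with finite products containing a distinguished object A) and T_a the theory obtained by freely adjoining a morphism a : 1 → A. Then for every model M_A : T_A → Set, the map sending a model M_a of T_a extending M_A to the element M_a(a)(⋆) ∈ M_A(A) is a bijection between the set of models of T_a extending M_A and the set M_A(A). -/
open CategoryTheory CategoryTheory.Limits

universe u

/-!
A model preserves the terminal object, so `M_a(1)` is a singleton and `M_a(a)` amounts to a
point of `M_A(A)`; every extension `M_a` is thus the extension of `M_A` along its own point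
given by the universal property of `T_a` (taken with `S = Type u`). Existence in that
universal property gives surjectivity of `M_a ↦ M_a(a)(⋆)`, uniqueness gives injectivity.
-/

noncomputable instance uniqueObjTerminal {C : Type u} [Category.{u} C] [HasTerminal C]
    (M : C ⥤ Type u) [PreservesLimit (Functor.empty.{0} C) M] : Unique (M.obj (⊤_ C)) :=
  Types.isTerminalEquivUnique _ (isLimitOfHasTerminalOfPreservesLimit M)

theorem types_eqToHom_apply {X Y : Type u} (h : X = Y) (x : X) : eqToHom h x = cast h x := by
  subst h; rfl

section

variable {T_A T_a : Type u} [Category.{u} T_A] [Category.{u} T_a] [HasTerminal T_a]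
  {ι : T_A ⥤ T_a} {A : T_A} (a : (⊤_ T_a) ⟶ ι.obj A) {M_A : T_A ⥤ Type u}

variable (ι M_A) in
abbrev ModelExtension : Type (u + 1) :=
  {M_a : T_a ⥤ Type u // Nonempty (PreservesFiniteProducts M_a) ∧ ι ⋙ M_a = M_A}

variable (M_A) in
def IsPointedExtension (H : T_a ⥤ Type u) (x : M_A.obj A) : Prop :=
  Nonempty (PreservesFiniteProducts H) ∧
    ∃ h : ι ⋙ H = M_A, H.map a ≫ eqToHom (Functor.congr_obj h A) =
      terminal.from (H.obj (⊤_ T_a)) ≫ TypeCat.ofHom (fun _ => x)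

namespace ModelExtension

noncomputable def point (M : ModelExtension ι M_A) : M_A.obj A :=
  haveI := M.2.1.some
  cast (congrArg (fun G => G.obj A) M.2.2) (M.1.map a default)

theorem point_eq (M : ModelExtension ι M_A) (t : M.1.obj (⊤_ T_a)) :
    M.point a = cast (congrArg (fun G => G.obj A) M.2.2) (M.1.map a t) := by
  have := M.2.1.some
  rw [Subsingleton.elim t default]
  rfl

theorem isPointedExtension_iff (M : ModelExtension ι M_A) (x : M_A.obj A) :
    IsPointedExtension a M_A M.1 x ↔ M.point a = x := by
  constructor
  · rintro ⟨_, _, hx⟩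
    have := M.2.1.some
    rw [point_eq a M default]
    simpa [types_eqToHom_apply] using ConcreteCategory.congr_hom hx default
  · rintro rfl
    refine ⟨M.2.1, M.2.2, ?_⟩
    ext t
    simpa [types_eqToHom_apply] using (point_eq a M t).symm

theorem bijective_point (hfree : ∀ x, ∃! H, IsPointedExtension a M_A H x) :
    Function.Bijective (point (ι := ι) (M_A := M_A) a) := by
  constructor
  · intro M M' hMM'
    obtain ⟨_, -, huniq⟩ := hfree (M.point a)
    exact Subtype.ext <| (huniq M.1 ((isPointedExtension_iff a M _).2 rfl)).trans
      (huniq M'.1 ((isPointedExtension_iff a M' _).2 hMM'.symm)).symm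
  · intro x
    obtain ⟨H, hH, -⟩ := hfree x
    exact ⟨⟨H, hH.1, hH.2.fst⟩, (isPointedExtension_iff a _ x).1 hH⟩

end ModelExtension

end

theorem stmt_8_general {T_A T_a : Type u} [Category.{u} T_A] [Category.{u} T_a]
    [HasFiniteProducts T_a]
    (ι : T_A ⥤ T_a)
    (A : T_A) (a : (⊤_ T_a) ⟶ ι.obj A)
    (hfree : ∀ (S : Type (u + 1)) [Category.{u} S] [HasFiniteProducts S]
      (F : T_A ⥤ S), Nonempty (PreservesFiniteProducts F) →
      ∀ x : (⊤_ S) ⟶ F.obj A,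
      ∃! H : T_a ⥤ S,
        Nonempty (PreservesFiniteProducts H) ∧
        ∃ h : ι ⋙ H = F,
          H.map a ≫ eqToHom (Functor.congr_obj h A) =
            terminal.from (H.obj (⊤_ T_a)) ≫ x)
    (M_A : T_A ⥤ Type u) (hMA : Nonempty (PreservesFiniteProducts M_A)) :
    ∃ e : {M_a : T_a ⥤ Type u //
        Nonempty (PreservesFiniteProducts M_a) ∧ ι ⋙ M_a = M_A} ≃ M_A.obj A,
      ∀ (M_a : {M_a : T_a ⥤ Type u //
          Nonempty (PreservesFiniteProducts M_a) ∧ ι ⋙ M_a = M_A})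
        (u : M_a.1.obj (⊤_ T_a)),
        e M_a = cast (congrArg (fun G : T_A ⥤ Type u => G.obj A) M_a.2.2)
          (M_a.1.map a u) := by
  have hpoint := ModelExtension.bijective_point a fun x =>
    hfree (Type u) M_A hMA (TypeCat.ofHom fun _ => x)
  exact ⟨Equiv.ofBijective _ hpoint, ModelExtension.point_eq a⟩

/-- Let `T_A` be a parameterized theory (a category with finite products with a
distinguished object `A`) and `ι : T_A ⥤ T_a` the theory obtained by freely adjoining a
morphism `a : 1 ⟶ A` (freeness is expressed by the universal property `hfree`: for every
theory `S`, every finite-product-preserving `F : T_A ⥤ S` equipped with a point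
`x : 1 ⟶ F(A)` extends uniquely to a finite-product-preserving `H : T_a ⥤ S` with
`H ∘ ι = F` and `H(a) = x`). Then for every model `M_A : T_A ⥤ Set`, sending a model
`M_a` of `T_a` extending `M_A` to the element `M_a(a)(⋆) ∈ M_A(A)` is a bijection
between the set of models of `T_a` extending `M_A` and the set `M_A(A)`. -/
theorem stmt_8 {T_A T_a : Type u} [Category.{u} T_A] [Category.{u} T_a]
    [HasFiniteProducts T_A] [HasFiniteProducts T_a]
    (ι : T_A ⥤ T_a) (hι : Nonempty (PreservesFiniteProducts ι))
    (A : T_A) (a : (⊤_ T_a) ⟶ ι.obj A)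
    (hfree : ∀ (S : Type (u + 1)) [Category.{u} S] [HasFiniteProducts S]
      (F : T_A ⥤ S), Nonempty (PreservesFiniteProducts F) →
      ∀ x : (⊤_ S) ⟶ F.obj A,
      ∃! H : T_a ⥤ S,
        Nonempty (PreservesFiniteProducts H) ∧
        ∃ h : ι ⋙ H = F,
          H.map a ≫ eqToHom (Functor.congr_obj h A) =
            terminal.from (H.obj (⊤_ T_a)) ≫ x)
    (M_A : T_A ⥤ Type u) (hMA : Nonempty (PreservesFiniteProducts M_A)) :
    ∃ e : {M_a : T_a ⥤ Type u //
        Nonempty (PreservesFiniteProducts M_a) ∧ ι ⋙ M_a = M_A} ≃ M_A.obj A,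
      ∀ (M_a : {M_a : T_a ⥤ Type u //
          Nonempty (PreservesFiniteProducts M_a) ∧ ι ⋙ M_a = M_A})
        (u : M_a.1.obj (⊤_ T_a)),
        e M_a = cast (congrArg (fun G : T_A ⥤ Type u => G.obj A) M_a.2.2)
          (M_a.1.map a u) :=
  stmt_8_general ι A a hfree M_A hMA
end

section
/- Exact parameterization: if M_0 is a model of the pure subtheory T_0 and M_A is a terminal object in the category of models of the parameterized theory T_A extending M_0, then the map sending α ∈ M_A(A) to the model M_{A,α} of T defined by M_{A,α}(X) = M_0(X) on types and M_{A,α}(f) = M_A(f')(α, −) on terms is a bijection between M_A(A) and the set of models of T extending M_0. -/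
/-!
A model `M` of `T` extending `M_0` is the same thing as a parameterized model with a single
parameter, so terminality of `M_A` yields a parameter `α` with `M_{A,α} = M`. Conversely, if
`M_{A,α} = M_{A,β}` then the map on parameters sending `α` to `β` and fixing everything else
is an endomorphism of `M_A`; by terminality it equals the identity, so `α = β`.
-/

open CategoryTheory

universe u v

variable {T : Type u} [Category.{v} T]

/-- A model of the parameterized theory `T_A = F_param(T)` extending a fixed
interpretation `obj`/`map0` of the pure subtheory `T_0` (given by the class `W` of pure
morphisms of `T`): a parameter set `P` together with, for each term `f` of `T`, a
`P`-indexed family of interpretations `act f p`, functorial in `f` for each fixed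
parameter `p`, and agreeing with the fixed pure interpretation on pure terms. -/
structure PModel (W : MorphismProperty T) (obj : T → Type u)
    (map0 : ∀ {X Y : T} (f : X ⟶ Y), W f → (obj X → obj Y)) where
  P : Type u
  act : ∀ {X Y : T}, (X ⟶ Y) → P → obj X → obj Y
  act_id : ∀ (X : T) (p : P), act (𝟙 X) p = id
  act_comp : ∀ {X Y Z : T} (f : X ⟶ Y) (g : Y ⟶ Z) (p : P),
    act (f ≫ g) p = act g p ∘ act f p
  act_pure : ∀ {X Y : T} (f : X ⟶ Y) (hf : W f) (p : P), act f p = map0 f hf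

/-- A model of `T` extending the fixed interpretation of the pure subtheory `T_0`. -/
structure TModel (W : MorphismProperty T) (obj : T → Type u)
    (map0 : ∀ {X Y : T} (f : X ⟶ Y), W f → (obj X → obj Y)) where
  act : ∀ {X Y : T}, (X ⟶ Y) → obj X → obj Y
  act_id : ∀ X : T, act (𝟙 X) = id
  act_comp : ∀ {X Y Z : T} (f : X ⟶ Y) (g : Y ⟶ Z), act (f ≫ g) = act g ∘ act f
  act_pure : ∀ {X Y : T} (f : X ⟶ Y) (hf : W f), act f = map0 f hf

attribute [ext] TModel

namespace PModel

variable {W : MorphismProperty T} {obj : T → Type u}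
  {map0 : ∀ {X Y : T} (f : X ⟶ Y), W f → (obj X → obj Y)}

def IsHom (N M : PModel W obj @map0) (φ : N.P → M.P) : Prop :=
  ∀ {X Y : T} (f : X ⟶ Y) (q : N.P), M.act f (φ q) = N.act f q

/-- The paper's `M_{A,α}`. -/
def specialize (M : PModel W obj @map0) (α : M.P) : TModel W obj @map0 where
  act f := M.act f α
  act_id X := M.act_id X α
  act_comp f g := M.act_comp f g α
  act_pure f hf := M.act_pure f hf α

theorem isHom_id (M : PModel W obj @map0) : IsHom M M id := fun _ _ => rfl

theorem isHom_update_id {M : PModel W obj @map0} [DecidableEq M.P] {α β : M.P}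
    (h : M.specialize α = M.specialize β) : IsHom M M (Function.update id α β) := by
  intro X Y f q
  by_cases hq : q = α
  · subst hq
    rw [Function.update_self]
    exact congrArg (fun N : TModel W obj @map0 => N.act f) h.symm
  · rw [Function.update_of_ne hq, id]

theorem specialize_injective {M : PModel W obj @map0}
    (hend : ∃! φ : M.P → M.P, IsHom M M φ) : Function.Injective M.specialize := by
  classical
  intro α β h
  have hupdate : Function.update id α β = id :=
    hend.unique (isHom_update_id h) (isHom_id M)
  simpa using (congrFun hupdate α).symm

end PModel

namespace TModel

variable {W : MorphismProperty T} {obj : T → Type u}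
  {map0 : ∀ {X Y : T} (f : X ⟶ Y), W f → (obj X → obj Y)}

def toPModel (N : TModel W obj @map0) : PModel W obj @map0 where
  P := PUnit
  act f _ := N.act f
  act_id X _ := N.act_id X
  act_comp f g _ := N.act_comp f g
  act_pure f hf _ := N.act_pure f hf

theorem specialize_eq_of_isHom (N : TModel W obj @map0) {M : PModel W obj @map0}
    {φ : PUnit → M.P} (hφ : PModel.IsHom N.toPModel M φ) : M.specialize (φ ⟨⟩) = N := by
  ext X Y f x
  exact congrFun (hφ f ⟨⟩) x

end TModel

/-- Exact parameterization: if `M_A` is a terminal model of the parameterized theory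
`T_A` extending the fixed pure model `M_0` (terminality being expressed by the unique
existence of a morphism of parameterized models into `M_A` from any other one), then
`α ↦ M_{A,α}`, where `M_{A,α}(f) = M_A(f')(α, −)`, is a bijection from the parameter
set `M_A(A)` onto the set of models of `T` extending `M_0`. -/
theorem stmt_11 (W : MorphismProperty T) (obj : T → Type u)
    (map0 : ∀ {X Y : T} (f : X ⟶ Y), W f → (obj X → obj Y))
    (MA : PModel W obj @map0)
    (hterm : ∀ N : PModel W obj @map0, ∃! φ : N.P → MA.P,
      ∀ {X Y : T} (f : X ⟶ Y) (q : N.P), MA.act f (φ q) = N.act f q) :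
    Function.Bijective (fun α : MA.P =>
      ({ act := fun f => MA.act f α
         act_id := fun X => MA.act_id X α
         act_comp := fun f g => MA.act_comp f g α
         act_pure := fun f hf => MA.act_pure f hf α } : TModel W obj @map0)) := by
  refine ⟨PModel.specialize_injective (hterm MA), fun N => ?_⟩
  obtain ⟨φ, hφ, -⟩ := hterm N.toPModel
  exact ⟨φ ⟨⟩, N.specialize_eq_of_isHom hφ⟩
end
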